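/- Let T' be obtained from the rooted binary tree T by an NNI at the configuration (a, b, c, d, e, f). Then the number of b-nonmaintaining top-vectors of T equals the number of c-nonmaintaining top-vectors of T', and the number of c-nonmaintaining top-vectors of T equals the number of b-nonmaintaining top-vectors of T'. -/
import Mathlib


open Pointwise

/-- A rooted binary tree on the finite vertex type `V`, presented by its parent function:
the root is its own parent, every vertex reaches the root by iterating the parent map,
every vertex has either no children (a leaf) or exactly two children, and the root has
exactly two children (so the root has degree 2, leaves have degree 1, and all other
vertices have degree 3). -/
structure RBT (V : Type) [Fintype V] [DecidableEq V] : Type where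
  root : V
  parent : V → V
  parent_root : parent root = root
  reaches : ∀ v : V, ∃ k : ℕ, parent^[k] v = root
  binary : ∀ v : V,
    Nat.card {u : V // parent u = v ∧ u ≠ v} = 0 ∨
      Nat.card {u : V // parent u = v ∧ u ≠ v} = 2
  root_binary : Nat.card {u : V // parent u = root ∧ u ≠ root} = 2

namespace RBT

variable {V : Type} [Fintype V] [DecidableEq V] (T : RBT V)

/-- `u` is a child of `v` in `T`. -/
def isChild (u v : V) : Prop := T.parent u = v ∧ u ≠ v

/-- A leaf of `T` is a vertex with no children. -/
def isLeaf (v : V) : Prop := ∀ u : V, T.parent u = v → u = v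

/-- An internal vertex of `T` is a vertex which is not a leaf. -/
def isInternal (v : V) : Prop := ¬ T.isLeaf v

instance : DecidablePred T.isLeaf := fun v =>
  decidable_of_iff (∀ u : V, T.parent u = v → u = v) Iff.rfl

instance : DecidablePred T.isInternal := fun v =>
  inferInstanceAs (Decidable (¬ T.isLeaf v))

/-- `u` is a (weak) descendant of `v`, i.e. `v` lies on the path from `u` to the root. -/
def desc (u v : V) : Prop := ∃ k : ℕ, T.parent^[k] u = v

/-- `u` is a strict descendant of `v`. -/
def strictDesc (u v : V) : Prop := T.desc u v ∧ u ≠ v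

/-- `u` and `v` are adjacent vertices of `T`. -/
def adjacent (u v : V) : Prop := T.isChild u v ∨ T.isChild v u

instance : DecidableRel T.isChild := fun u v =>
  decidable_of_iff (T.parent u = v ∧ u ≠ v) Iff.rfl

instance : DecidableRel T.adjacent := fun u v =>
  inferInstanceAs (Decidable (T.isChild u v ∨ T.isChild v u))

/-- The set of edges (each edge being labelled by its endpoint farther from the root)
on the path from `l` up to the root. -/
def upEdges (l : V) : Set V := {u : V | u ≠ T.root ∧ T.desc l u}

/-- The edge set of the unique path in `T` joining the two members of an unordered
pair of vertices (edges are labelled by their endpoint farther from the root). -/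
def pathEdges : Sym2 V → Set V :=
  Sym2.lift ⟨fun l₁ l₂ => symmDiff (T.upEdges l₁) (T.upEdges l₂), fun _ _ => symmDiff_comm _ _⟩

/-- `v` is the lowest common ancestor of `l₁` and `l₂`: it is an ancestor of both, and it
descends from every common ancestor.  Equivalently, `v` is the unique vertex of the path
from `l₁` to `l₂` which is an ancestor of every vertex of that path. -/
def isLCA (l₁ l₂ v : V) : Prop :=
  T.desc l₁ v ∧ T.desc l₂ v ∧ ∀ w : V, T.desc l₁ w → T.desc l₂ w → T.desc v w

/-- `v` is the top vertex of the path joining the two members of the unordered pair `p`. -/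
def isTopOf (v : V) : Sym2 V → Prop :=
  Sym2.lift ⟨fun l₁ l₂ => T.isLCA l₁ l₂ v, fun a b => by
    simp only [eq_iff_iff, isLCA]
    constructor <;> rintro ⟨h₁, h₂, h₃⟩ <;> exact ⟨h₂, h₁, fun w hw₁ hw₂ => h₃ w hw₂ hw₁⟩⟩

end RBT

/-- A system of disjoint paths in `T`: a finite set of unordered pairs of distinct leaves,
such that the unique paths in `T` joining the pairs are pairwise edge-disjoint. -/
structure PathSystem {V : Type} [Fintype V] [DecidableEq V] (T : RBT V) : Type where
  pairs : Finset (Sym2 V)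
  leaf_mem : ∀ p ∈ pairs, ∀ l ∈ p, T.isLeaf l
  not_diag : ∀ p ∈ pairs, ¬ p.IsDiag
  edge_disjoint : (pairs : Set (Sym2 V)).Pairwise fun p q =>
    Disjoint (T.pathEdges p) (T.pathEdges q)

namespace PathSystem

variable {V : Type} [Fintype V] [DecidableEq V] {T : RBT V}

/-- The top-set of a system of disjoint paths: the set of top vertices of its paths. -/
def topSet (P : PathSystem T) : Set V := {v : V | ∃ p ∈ P.pairs, T.isTopOf v p}

/-- The top-vector of a system of disjoint paths, as a point of `ℝ^{Int(T)}`: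
the 0/1 indicator vector of its top-set. -/
noncomputable def topVector (P : PathSystem T) : {v : V // T.isInternal v} → ℝ := fun v =>
  Set.indicator P.topSet (fun _ => (1 : ℝ)) (v : V)

end PathSystem

namespace RBT

variable {V : Type} [Fintype V] [DecidableEq V] (T : RBT V)

/-- The set of top-vectors of all systems of disjoint paths in `T`. -/
noncomputable def topVectors : Set ({v : V // T.isInternal v} → ℝ) :=
  Set.range fun P : PathSystem T => P.topVector

/-- The CFN-MC polytope `R_T ⊆ ℝ^{Int(T)}`: the convex hull of the top-vectors of all
systems of disjoint paths in `T`. -/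
noncomputable def cfnmcPolytope : Set ({v : V // T.isInternal v} → ℝ) :=
  convexHull ℝ T.topVectors

end RBT

namespace PathSystem

variable {V : Type} [Fintype V] [DecidableEq V] {T : RBT V}

/-- The top-vector of a system of disjoint paths, recorded as a vector indexed by all
vertices of `T` (its support lies in `Int(T)`, since top vertices are internal; this is
the canonical copy of the top-vector under `ℝ^{Int(T)} ↪ ℝ^V`). -/
noncomputable def topVec (P : PathSystem T) : V → ℝ :=
  Set.indicator P.topSet fun _ => (1 : ℝ)

end PathSystem

namespace RBT

variable {V : Type} [Fintype V] [DecidableEq V] (T : RBT V)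

/-- The CFN-MC polytope `R_T`, realized inside `ℝ^V` via the canonical embedding
`ℝ^{Int(T)} ↪ ℝ^V` (all coordinates outside `Int(T)` vanish on `R_T`). -/
noncomputable def cfnmcPolytopeFull : Set (V → ℝ) :=
  convexHull ℝ (Set.range fun P : PathSystem T => P.topVec)

/-- The vertex `x` is blocked in the vertex set `S`: every path in `T` from `x` down to a
leaf descended from `x` contains some vertex of `S`. -/
def blocked (x : V) (S : Set V) : Prop :=
  ∀ l : V, T.isLeaf l → T.desc l x → ∃ w ∈ S, T.desc l w ∧ T.desc w x

end RBT

/-- `x` is the top-vector (in `ℝ^V`) of some system of disjoint paths in `T`. -/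
def IsTopVecOf {V : Type} [Fintype V] [DecidableEq V] (T : RBT V) (x : V → ℝ) : Prop :=
  ∃ P : PathSystem T, P.topVec = x

/-- A nearest neighbor interchange (NNI) from `T` to `T'` at the configuration
`(a, b, c, d, e, f)`: in `T`, `b` is a child of `a`, the children of `b` are `c` and `f`
with `c` internal, and the children of `c` are `d` and `e`.  The tree `T'` has the same
vertex set, the same root and the same leaves: in `T'` the children of `b` are `d` and
`c`, the children of `c` are `e` and `f`, and all other parent–child relations are as in
`T` (so `Int(T') = Int(T)`). -/
structure NNIConfig {V : Type} [Fintype V] [DecidableEq V] (T T' : RBT V) : Type where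
  a : V
  b : V
  c : V
  d : V
  e : V
  f : V
  child_b : T.isChild b a
  child_c : T.isChild c b
  child_f : T.isChild f b
  fc_ne : f ≠ c
  child_d : T.isChild d c
  child_e : T.isChild e c
  de_ne : d ≠ e
  root_eq : T'.root = T.root
  child_d' : T'.isChild d b
  child_f' : T'.isChild f c
  parent_eq : ∀ v : V, v ≠ d → v ≠ f → T'.parent v = T.parent v

namespace RBT
variable {V : Type} [Fintype V] [DecidableEq V] {T : RBT V}


lemma desc_refl (u : V) : T.desc u u := ⟨0, rfl⟩

lemma desc_trans {u v w : V} (h1 : T.desc u v) (h2 : T.desc v w) : T.desc u w := by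
  obtain ⟨k, hk⟩ := h1; obtain ⟨m, hm⟩ := h2
  exact ⟨m + k, by rw [Function.iterate_add_apply, hk, hm]⟩

lemma iterate_root (k : ℕ) : T.parent^[k] T.root = T.root := by
  induction k with
  | zero => rfl
  | succ n ih => rw [Function.iterate_succ_apply', ih, T.parent_root]

lemma eq_root_of_iterate_fix {u : V} {k : ℕ} (hk : 0 < k) (h : T.parent^[k] u = u) :
    u = T.root := by
  obtain ⟨K, hK⟩ := T.reaches u
  have hiter : ∀ n : ℕ, T.parent^[k * n] u = u := by
    intro n
    induction n with
    | zero => simp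
    | succ m ih => rw [Nat.mul_succ, Function.iterate_add_apply, h, ih]
  have h1 : T.parent^[k * K] u = u := hiter K
  have hge : K ≤ k * K := Nat.le_mul_of_pos_left K hk
  calc u = T.parent^[k * K] u := h1.symm
    _ = T.parent^[k*K - K] (T.parent^[K] u) := by
        rw [← Function.iterate_add_apply, Nat.sub_add_cancel hge]
    _ = T.root := by rw [hK, iterate_root]

lemma desc_antisymm {u v : V} (h1 : T.desc u v) (h2 : T.desc v u) : u = v := by
  obtain ⟨k, hk⟩ := h1; obtain ⟨m, hm⟩ := h2
  rcases Nat.eq_zero_or_pos (m + k) with h | h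
  · obtain ⟨rfl, rfl⟩ : m = 0 ∧ k = 0 := by omega
    exact hk
  · have hfix : T.parent^[m + k] u = u := by rw [Function.iterate_add_apply, hk, hm]
    have hu : u = T.root := eq_root_of_iterate_fix h hfix
    subst hu
    rw [iterate_root] at hk; exact hk

lemma desc_root (u : V) : T.desc u T.root := T.reaches u

lemma desc_total {l u v : V} (h1 : T.desc l u) (h2 : T.desc l v) :
    T.desc u v ∨ T.desc v u := by
  obtain ⟨k, hk⟩ := h1; obtain ⟨m, hm⟩ := h2
  rcases Nat.le_total k m with h | h
  · left; exact ⟨m - k, by rw [← hk, ← Function.iterate_add_apply, Nat.sub_add_cancel h, hm]⟩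
  · right; exact ⟨k - m, by rw [← hm, ← Function.iterate_add_apply, Nat.sub_add_cancel h, hk]⟩

lemma desc_of_child {u v : V} (h : T.isChild u v) : T.desc u v := ⟨1, h.1⟩

/-- If `l` strictly descends from `v`, there is a child of `v` on the way. -/
lemma exists_child_of_desc_ne {l v : V} (h : T.desc l v) (hne : l ≠ v) :
    ∃ z, T.isChild z v ∧ T.desc l z := by
  obtain ⟨k, hk⟩ := h
  -- take minimal k
  have hex : ∃ k, T.parent^[k] l = v := ⟨k, hk⟩
  classical
  let k0 := Nat.find hex
  have hk0 : T.parent^[k0] l = v := Nat.find_spec hex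
  have hk0pos : 0 < k0 := by
    rcases Nat.eq_zero_or_pos k0 with h0 | h0
    · exfalso; apply hne; rw [← hk0, h0]; rfl
    · exact h0
  refine ⟨T.parent^[k0 - 1] l, ⟨?_, ?_⟩, ⟨k0 - 1, rfl⟩⟩
  · rw [← Function.iterate_succ_apply' T.parent, Nat.succ_eq_add_one, Nat.sub_add_cancel hk0pos, hk0]
  · intro heq
    have : T.parent^[k0 - 1] l = v := heq
    exact Nat.find_min hex (by omega) this

lemma desc_leaf_eq {x v : V} (hl : T.isLeaf v) (h : T.desc x v) : x = v := by
  by_contra hne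
  obtain ⟨z, hz, _⟩ := exists_child_of_desc_ne h hne
  exact hz.2 (hl z hz.1)

/-- Ancestors of a child: either the child itself, or an ancestor of the parent. -/
lemma anc_child {u v w : V} (hc : T.isChild u v) (h : T.desc u w) : w = u ∨ T.desc v w := by
  obtain ⟨k, hk⟩ := h
  cases k with
  | zero => left; exact hk.symm
  | succ n => right; exact ⟨n, by rw [← hk, Function.iterate_succ_apply, hc.1]⟩

lemma sibling_not_desc {z z' v : V} (hz : T.isChild z v) (hz' : T.isChild z' v)
    (hne : z ≠ z') : ¬ T.desc z z' := by
  intro h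
  rcases anc_child hz h with h1 | h1
  · exact hne h1.symm
  · exact hz'.2 (desc_antisymm (desc_of_child hz') h1)

/-- If `w` is an ancestor of `l` strictly below `v`, and `u` is the child of `v` above `l`,
then `w` descends from... actually `w ≤ u`. -/
lemma desc_le_child {u v l w : V} (hc : T.isChild u v) (hl : T.desc l u)
    (hw : T.desc l w) (hwv : T.desc w v) (hne : w ≠ v) : T.desc w u := by
  rcases desc_total hl hw with h | h
  · -- u ≤ w : w is ancestor of u
    rcases anc_child hc h with h1 | h1
    · rw [h1]; exact desc_refl u
    · exact absurd (desc_antisymm hwv h1) hne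
  · exact h

lemma child_eq_of_common_desc {z z' v x : V} (hz : T.isChild z v) (hz' : T.isChild z' v)
    (hx : T.desc x z) (hx' : T.desc x z') : z = z' := by
  by_contra hne
  rcases desc_total hx hx' with h | h
  · exact sibling_not_desc hz hz' hne h
  · exact sibling_not_desc hz' hz (Ne.symm hne) h

lemma not_isLeaf_of_child {u v : V} (h : T.isChild u v) : T.isInternal v :=
  fun hl => h.2 (hl u h.1)

lemma two_children {v : V} (hv : T.isInternal v) :
    ∃ u1 u2, T.isChild u1 v ∧ T.isChild u2 v ∧ u1 ≠ u2 ∧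
      ∀ z, T.isChild z v → z = u1 ∨ z = u2 := by
  classical
  have hne : Nat.card {u : V // T.parent u = v ∧ u ≠ v} ≠ 0 := by
    simp only [isInternal, isLeaf, not_forall] at hv
    obtain ⟨u, hu, hne⟩ := hv
    have : Nonempty {u : V // T.parent u = v ∧ u ≠ v} := ⟨⟨u, hu, hne⟩⟩
    simp [Nat.card_eq_fintype_card, Fintype.card_ne_zero]
  have h2 : Nat.card {u : V // T.parent u = v ∧ u ≠ v} = 2 := (T.binary v).resolve_left hne
  rw [Nat.card_eq_two_iff] at h2
  obtain ⟨⟨u1, hu1⟩, ⟨u2, hu2⟩, hne12, huniv⟩ := h2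
  refine ⟨u1, u2, hu1, hu2, fun h => hne12 (by simp [h]), fun z hz => ?_⟩
  have := Set.mem_univ (⟨z, hz⟩ : {u : V // T.parent u = v ∧ u ≠ v})
  rw [← huniv] at this
  rcases this with h | h <;> [left; right] <;> exact congrArg Subtype.val h

/-- exactly two children, given two distinct ones -/
lemma children_pair {v z z' : V} (hz : T.isChild z v) (hz' : T.isChild z' v) (hne : z ≠ z') :
    ∀ u, T.isChild u v → u = z ∨ u = z' := by
  obtain ⟨u1, u2, hu1, hu2, h12, huniq⟩ := two_children (not_isLeaf_of_child hz)
  intro u hu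
  rcases huniq z hz with rfl | rfl <;> rcases huniq z' hz' with rfl | rfl <;>
    first | exact absurd rfl hne | (rcases huniq u hu with rfl | rfl <;> simp)

end RBT

namespace RBT
variable {V : Type} [Fintype V] [DecidableEq V] {T : RBT V}

/-- There is a clean (S-free) path from some leaf up to `u`. -/
def Freely (T : RBT V) (S : Set V) (u : V) : Prop :=
  ∃ l, T.isLeaf l ∧ T.desc l u ∧ ∀ w, T.desc l w → T.desc w u → w ∉ S

/-- `S` is realizable as a top-set. -/
def Good (T : RBT V) (S : Set V) : Prop :=
  (∀ v ∈ S, T.isInternal v) ∧ ∀ v ∈ S, ∀ u, T.isChild u v → Freely T S u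

lemma Freely.notMem {S : Set V} {u : V} (h : Freely T S u) : u ∉ S := by
  obtain ⟨l, _, hlu, hcl⟩ := h
  exact hcl u hlu (desc_refl u)

lemma freely_of_leaf {S : Set V} {u : V} (hu : T.isLeaf u) (huS : u ∉ S) :
    Freely T S u := by
  refine ⟨u, hu, desc_refl u, fun w hw1 hw2 => ?_⟩
  rwa [desc_antisymm hw2 hw1]

lemma freely_decomp {S : Set V} {v : V} (hv : T.isInternal v) :
    Freely T S v ↔ v ∉ S ∧ ∃ u, T.isChild u v ∧ Freely T S u := by
  constructor
  · rintro ⟨l, hl, hlv, hcl⟩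
    have hlne : l ≠ v := fun h => hv (h ▸ hl)
    obtain ⟨z, hz, hlz⟩ := exists_child_of_desc_ne hlv hlne
    refine ⟨hcl v hlv (desc_refl v), z, hz, l, hl, hlz, fun w hw1 hw2 => ?_⟩
    exact hcl w hw1 (desc_trans hw2 (desc_of_child hz))
  · rintro ⟨hvS, u, hu, l, hl, hlu, hcl⟩
    refine ⟨l, hl, desc_trans hlu (desc_of_child hu), fun w hw1 hw2 => ?_⟩
    by_cases hwv : w = v
    · exact hwv ▸ hvS
    · exact hcl w hw1 (desc_le_child hu hlu hw1 hw2 hwv)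

lemma isLCA_unique {l1 l2 v w : V} (h1 : T.isLCA l1 l2 v) (h2 : T.isLCA l1 l2 w) :
    v = w :=
  desc_antisymm (h1.2.2 w h2.1 h2.2.1) (h2.2.2 v h1.1 h1.2.1)

lemma isTopOf_mk {l1 l2 v : V} : T.isTopOf v s(l1, l2) ↔ T.isLCA l1 l2 v := Iff.rfl

lemma mem_pathEdges_mk {l1 l2 w : V} :
    w ∈ T.pathEdges s(l1, l2) ↔ w ∈ symmDiff (T.upEdges l1) (T.upEdges l2) := Iff.rfl

lemma child_ne_root {z w : V} (h : T.isChild z w) : z ≠ T.root := by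
  intro hz
  subst hz
  exact h.2 ((T.parent_root).symm.trans h.1)

/-- Membership of a child's edge in a path's edge set. -/
lemma child_edge_mem {l1 l2 v z1 z2 : V} (hz1 : T.isChild z1 v) (hz2 : T.isChild z2 v)
    (hne : z1 ≠ z2) (h1 : T.desc l1 z1) (h2 : T.desc l2 z2) :
    z1 ∈ T.pathEdges s(l1, l2) := by
  rw [mem_pathEdges_mk, Set.mem_symmDiff]
  left
  refine ⟨⟨child_ne_root hz1, h1⟩, fun hmem => ?_⟩
  exact hne (child_eq_of_common_desc hz1 hz2 hmem.2 h2)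

/-- Edges of a path lie in the two intervals below the top. -/
lemma pathEdges_subset_intervals {l1 l2 v z1 z2 w : V}
    (hz1 : T.isChild z1 v) (hz2 : T.isChild z2 v)
    (h1 : T.desc l1 z1) (h2 : T.desc l2 z2)
    (hw : w ∈ T.pathEdges s(l1, l2)) :
    (T.desc l1 w ∧ T.desc w z1) ∨ (T.desc l2 w ∧ T.desc w z2) := by
  rw [mem_pathEdges_mk, Set.mem_symmDiff] at hw
  have key : ∀ (la lb : V) (za : V), T.isChild za v → T.desc la za →
      T.desc lb v → T.desc la w → ¬ (w ≠ T.root ∧ T.desc lb w) → w ≠ T.root →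
      T.desc w za := by
    intro la lb za hza hla hlb hlaw hnb hwr
    have hlav : T.desc la v := desc_trans hla (desc_of_child hza)
    have hwv : T.desc w v := by
      rcases desc_total hlaw hlav with h | h
      · exact h
      · exact absurd ⟨hwr, desc_trans hlb h⟩ hnb
    have hwnev : w ≠ v := by
      intro hweq
      exact hnb ⟨hwr, hweq ▸ hlb⟩
    exact desc_le_child hza hla hlaw hwv hwnev
  rcases hw with ⟨⟨hwr, hlw⟩, hnb⟩ | ⟨⟨hwr, hlw⟩, hnb⟩
  · exact Or.inl ⟨hlw, key l1 l2 z1 hz1 h1 (desc_trans h2 (desc_of_child hz2)) hlw hnb hwr⟩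
  · exact Or.inr ⟨hlw, key l2 l1 z2 hz2 h2 (desc_trans h1 (desc_of_child hz1)) hlw hnb hwr⟩

end RBT

namespace RBT
variable {V : Type} [Fintype V] [DecidableEq V] {T : RBT V}

lemma topSet_internal (P : PathSystem T) {v : V} (hv : v ∈ P.topSet) : T.isInternal v := by
  obtain ⟨p, hp, htop⟩ := hv
  induction p with
  | _ l1 l2 =>
    rw [isTopOf_mk] at htop
    have hll : l1 ≠ l2 := by
      have := P.not_diag _ hp
      rwa [Sym2.mk_isDiag_iff] at this
    have hl1 : T.isLeaf l1 := P.leaf_mem _ hp l1 (Sym2.mem_mk_left _ _)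
    have hl2 : T.isLeaf l2 := P.leaf_mem _ hp l2 (Sym2.mem_mk_right _ _)
    by_cases h1 : l1 = v
    · subst h1
      exact absurd (desc_leaf_eq hl1 htop.2.1) (Ne.symm hll)
    · obtain ⟨z, hz, _⟩ := exists_child_of_desc_ne htop.1 h1
      exact not_isLeaf_of_child hz

lemma leaf_ne_of_internal {l v : V} (hl : T.isLeaf l) (hv : T.isInternal v) : l ≠ v :=
  fun h => hv (h ▸ hl)

/-- Key lemma: the clean-path property of top sets. -/
lemma topSet_clean (P : PathSystem T) {l1 l2 v u : V} (hp : s(l1, l2) ∈ P.pairs)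
    (hlca : T.isLCA l1 l2 v) (hc : T.isChild u v) (hl1 : T.desc l1 u) :
    ∀ w, T.desc l1 w → T.desc w u → w ∉ P.topSet := by
  intro w hw1 hw2 hwS
  obtain ⟨q, hq, htop⟩ := hwS
  have hwint : T.isInternal w := topSet_internal P ⟨q, hq, htop⟩
  have hleaf1 : T.isLeaf l1 := P.leaf_mem _ hp l1 (Sym2.mem_mk_left _ _)
  obtain ⟨z, hz, hlz⟩ := exists_child_of_desc_ne hw1 (leaf_ne_of_internal hleaf1 hwint)
  -- z is in the edges of the path (l1, l2)
  have hz_p : z ∈ T.pathEdges s(l1, l2) := by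
    rw [mem_pathEdges_mk, Set.mem_symmDiff]
    left
    refine ⟨⟨child_ne_root hz, hlz⟩, fun hmem => ?_⟩
    -- l2 ≤ z would make z a common ancestor, so v ≤ z ≤ u, contradiction
    have hvz : T.desc v z := hlca.2.2 z hlz hmem.2
    have hvu : T.desc v u := desc_trans hvz (desc_trans (desc_of_child hz) hw2)
    exact hc.2 (desc_antisymm (desc_of_child hc) hvu)
  -- z is in the edges of q
  induction q with
  | _ m1 m2 =>
    rw [isTopOf_mk] at htop
    have hmm : m1 ≠ m2 := by
      have := P.not_diag _ hq
      rwa [Sym2.mk_isDiag_iff] at this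
    have hm1 : T.isLeaf m1 := P.leaf_mem _ hq m1 (Sym2.mem_mk_left _ _)
    have hm2 : T.isLeaf m2 := P.leaf_mem _ hq m2 (Sym2.mem_mk_right _ _)
    obtain ⟨z1, hz1, hmz1⟩ := exists_child_of_desc_ne htop.1 (leaf_ne_of_internal hm1 hwint)
    obtain ⟨z2, hz2, hmz2⟩ :=
      exists_child_of_desc_ne htop.2.1 (leaf_ne_of_internal hm2 hwint)
    have hz12 : z1 ≠ z2 := by
      intro h
      subst h
      have hvz : T.desc w z1 := htop.2.2 z1 hmz1 hmz2
      exact hz1.2 (desc_antisymm (desc_of_child hz1) hvz)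
    have hz_q : z ∈ T.pathEdges s(m1, m2) := by
      rcases children_pair hz1 hz2 hz12 z hz with rfl | rfl
      · exact child_edge_mem hz1 hz2 hz12 hmz1 hmz2
      · rw [Sym2.eq_swap]
        exact child_edge_mem hz2 hz1 (Ne.symm hz12) hmz2 hmz1
    by_cases hpq : s(l1, l2) = s(m1, m2)
    · -- same pair: then w = v, contradiction
      have : T.isTopOf w s(l1, l2) := by rw [hpq]; exact htop
      rw [isTopOf_mk] at this
      have hvw : v = w := isLCA_unique hlca this
      subst hvw
      exact hc.2 (desc_antisymm (desc_of_child hc) hw2)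
    · exact Set.disjoint_left.mp (P.edge_disjoint hp hq hpq) hz_p hz_q

theorem good_topSet (P : PathSystem T) : Good T P.topSet := by
  refine ⟨fun v hv => topSet_internal P hv, fun v hv u hu => ?_⟩
  obtain ⟨p, hp, htop⟩ := hv
  have hvint : T.isInternal v := topSet_internal P ⟨p, hp, htop⟩
  induction p with
  | _ l1 l2 =>
    rw [isTopOf_mk] at htop
    have hl1 : T.isLeaf l1 := P.leaf_mem _ hp l1 (Sym2.mem_mk_left _ _)
    have hl2 : T.isLeaf l2 := P.leaf_mem _ hp l2 (Sym2.mem_mk_right _ _)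
    obtain ⟨z1, hz1, hmz1⟩ := exists_child_of_desc_ne htop.1 (leaf_ne_of_internal hl1 hvint)
    obtain ⟨z2, hz2, hmz2⟩ :=
      exists_child_of_desc_ne htop.2.1 (leaf_ne_of_internal hl2 hvint)
    rcases children_pair hz1 hz2 (by
      intro h
      subst h
      exact hz1.2 (desc_antisymm (desc_of_child hz1) (htop.2.2 z1 hmz1 hmz2))) u hu with rfl | rfl
    · exact ⟨l1, hl1, hmz1, topSet_clean P hp htop hu hmz1⟩
    · have htop' : T.isLCA l2 l1 v := ⟨htop.2.1, htop.1, fun w h1 h2 => htop.2.2 w h2 h1⟩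
      refine ⟨l2, hl2, hmz2, topSet_clean P (by rwa [Sym2.eq_swap] at hp) htop' hu hmz2⟩

end RBT

namespace RBT
variable {V : Type} [Fintype V] [DecidableEq V] {T : RBT V}

theorem exists_pathSystem_of_good {S : Set V} (hS : Good T S) :
    ∃ P : PathSystem T, P.topSet = S := by
  classical
  have hch : ∀ v : V, ∃ z1 z2 l1 l2 : V, v ∈ S →
      T.isChild z1 v ∧ T.isChild z2 v ∧ z1 ≠ z2 ∧
      T.isLeaf l1 ∧ T.desc l1 z1 ∧ (∀ w, T.desc l1 w → T.desc w z1 → w ∉ S) ∧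
      T.isLeaf l2 ∧ T.desc l2 z2 ∧ (∀ w, T.desc l2 w → T.desc w z2 → w ∉ S) := by
    intro v
    by_cases hv : v ∈ S
    · obtain ⟨z1, z2, hz1, hz2, hne, -⟩ := two_children (hS.1 v hv)
      obtain ⟨l1, hl1, hd1, hc1⟩ := hS.2 v hv z1 hz1
      obtain ⟨l2, hl2, hd2, hc2⟩ := hS.2 v hv z2 hz2
      exact ⟨z1, z2, l1, l2, fun _ => ⟨hz1, hz2, hne, hl1, hd1, hc1, hl2, hd2, hc2⟩⟩
    · exact ⟨v, v, v, v, fun h => absurd h hv⟩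
  choose z1 z2 l1 l2 hprop using hch
  -- basic facts for v ∈ S
  have hlca : ∀ v ∈ S, T.isLCA (l1 v) (l2 v) v := by
    intro v hv
    obtain ⟨hz1, hz2, hne, hl1, hd1, hc1, hl2, hd2, hc2⟩ := hprop v hv
    have h1v : T.desc (l1 v) v := desc_trans hd1 (desc_of_child hz1)
    have h2v : T.desc (l2 v) v := desc_trans hd2 (desc_of_child hz2)
    refine ⟨h1v, h2v, fun w hw1 hw2 => ?_⟩
    rcases desc_total h1v hw1 with h | h
    · exact h
    · by_cases hwv : w = v
      · subst hwv; exact desc_refl w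
      · have hwz1 : T.desc w (z1 v) := desc_le_child hz1 hd1 hw1 h hwv
        have : T.desc (l2 v) (z1 v) := desc_trans hw2 hwz1
        exact absurd (child_eq_of_common_desc hz1 hz2 this hd2) hne
  have hll : ∀ v ∈ S, l1 v ≠ l2 v := by
    intro v hv heq
    obtain ⟨hz1, hz2, hne, hl1, hd1, hc1, hl2, hd2, hc2⟩ := hprop v hv
    exact hne (child_eq_of_common_desc hz1 hz2 hd1 (heq ▸ hd2))
  -- uniqueness: the top of the pair of v is v
  have htopv : ∀ v ∈ S, ∀ w, T.isTopOf w s(l1 v, l2 v) → w = v := by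
    intro v hv w hw
    rw [isTopOf_mk] at hw
    exact isLCA_unique hw (hlca v hv)
  have hinj : ∀ v ∈ S, ∀ v' ∈ S, s(l1 v, l2 v) = s(l1 v', l2 v') → v = v' := by
    intro v hv v' hv' heq
    exact htopv v' hv' v (by rw [← heq, isTopOf_mk]; exact hlca v hv)
  refine ⟨⟨(Set.toFinite S).toFinset.image (fun v => s(l1 v, l2 v)), ?_, ?_, ?_⟩, ?_⟩
  · intro p hp lf hlf
    obtain ⟨v, hv, rfl⟩ := Finset.mem_image.mp hp
    rw [Set.Finite.mem_toFinset] at hv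
    obtain ⟨hz1, hz2, hne, hl1, hd1, hc1, hl2, hd2, hc2⟩ := hprop v hv
    rcases Sym2.mem_iff.mp hlf with rfl | rfl
    · exact hl1
    · exact hl2
  · intro p hp
    obtain ⟨v, hv, rfl⟩ := Finset.mem_image.mp hp
    rw [Set.Finite.mem_toFinset] at hv
    rw [Sym2.mk_isDiag_iff]
    exact hll v hv
  · intro p hp q hq hpq
    simp only [Finset.coe_image, Set.mem_image, Finset.mem_coe,
      Set.Finite.coe_toFinset] at hp hq
    obtain ⟨v, hv, rfl⟩ := hp
    obtain ⟨v', hv', rfl⟩ := hq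
    have hvv' : v ≠ v' := fun h => hpq (by rw [h])
    rw [Set.disjoint_left]
    intro w hw hw'
    obtain ⟨hz1, hz2, hne, hl1, hd1, hc1, hl2, hd2, hc2⟩ := hprop v hv
    obtain ⟨hz1', hz2', hne', hl1', hd1', hc1', hl2', hd2', hc2'⟩ := hprop v' hv'
    have hint := pathEdges_subset_intervals hz1 hz2 hd1 hd2 hw
    have hint' := pathEdges_subset_intervals hz1' hz2' hd1' hd2' hw'
    -- w descends to both v and v'
    have hwv : T.desc w v := by
      rcases hint with ⟨-, h⟩ | ⟨-, h⟩
      · exact desc_trans h (desc_of_child hz1)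
      · exact desc_trans h (desc_of_child hz2)
    have hwv' : T.desc w v' := by
      rcases hint' with ⟨-, h⟩ | ⟨-, h⟩
      · exact desc_trans h (desc_of_child hz1')
      · exact desc_trans h (desc_of_child hz2')
    have main : ∀ (vv : V), vv ∈ S →
        ∀ (za lv : V), T.isChild za vv → T.desc lv za →
        (∀ u, T.desc lv u → T.desc u za → u ∉ S) →
        T.desc lv w → T.desc w za →
        ∀ v2 ∈ S, T.desc v2 vv → v2 ≠ vv → T.desc w v2 → False := by
      intro vv hvv za lv hza hlv hclean hlw hwza v2 hv2S hv2vv hv2ne hwv2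
      have hlv2 : T.desc lv v2 := desc_trans hlw hwv2
      have hv2za : T.desc v2 za := desc_le_child hza hlv hlv2 hv2vv hv2ne
      exact hclean v2 hlv2 hv2za hv2S
    rcases desc_total hwv hwv' with h | h
    · -- v below v' : use the interval of v'
      rcases hint' with ⟨ha, hb⟩ | ⟨ha, hb⟩
      · exact main v' hv' (z1 v') (l1 v') hz1' hd1' hc1' ha hb v hv h hvv' hwv
      · exact main v' hv' (z2 v') (l2 v') hz2' hd2' hc2' ha hb v hv h hvv' hwv
    · rcases hint with ⟨ha, hb⟩ | ⟨ha, hb⟩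
      · exact main v hv (z1 v) (l1 v) hz1 hd1 hc1 ha hb v' hv' h (Ne.symm hvv') hwv'
      · exact main v hv (z2 v) (l2 v) hz2 hd2 hc2 ha hb v' hv' h (Ne.symm hvv') hwv'
  · ext v0
    simp only [PathSystem.topSet, Set.mem_setOf_eq, Finset.mem_image,
      Set.Finite.mem_toFinset]
    constructor
    · rintro ⟨p, ⟨v, hv, rfl⟩, htop⟩
      rw [htopv v hv v0 htop]
      exact hv
    · intro hv0
      exact ⟨s(l1 v0, l2 v0), ⟨v0, hv0, rfl⟩, (isTopOf_mk).mpr (hlca v0 hv0)⟩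

/-- The characterization of top-vectors. -/
theorem isTopVecOf_iff (T : RBT V) (x : V → ℝ) :
    IsTopVecOf T x ↔ ∃ S : Set V, Good T S ∧ x = Set.indicator S (fun _ => (1 : ℝ)) := by
  constructor
  · rintro ⟨P, rfl⟩
    exact ⟨P.topSet, good_topSet P, rfl⟩
  · rintro ⟨S, hS, rfl⟩
    obtain ⟨P, hP⟩ := exists_pathSystem_of_good hS
    exact ⟨P, by rw [PathSystem.topVec, hP]⟩

lemma indicator_one_injective {S1 S2 : Set V}
    (h : Set.indicator S1 (fun _ => (1 : ℝ)) = Set.indicator S2 (fun _ => (1 : ℝ))) :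
    S1 = S2 := by
  ext v
  have := congrFun h v
  by_cases h1 : v ∈ S1 <;> by_cases h2 : v ∈ S2 <;>
    simp [h1, h2] at this ⊢

lemma indicator_one_eq_one {S : Set V} {v : V} :
    Set.indicator S (fun _ => (1 : ℝ)) v = 1 ↔ v ∈ S := by
  by_cases h : v ∈ S <;> simp [h]

end RBT

namespace RBT
variable {V : Type} [Fintype V] [DecidableEq V]

/-- Generic transfer of descendancy between two trees whose parent maps agree along the
relevant chain. -/
lemma desc_transfer {T T2 : RBT V} {x w : V} (h : T.desc x w)
    (H : ∀ y, T.desc x y → T.desc y w → y ≠ w → T2.parent y = T.parent y) :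
    T2.desc x w := by
  classical
  have hex : ∃ k, T.parent^[k] x = w := h
  have hspec : T.parent^[Nat.find hex] x = w := Nat.find_spec hex
  have key : ∀ j, j ≤ Nat.find hex → T2.parent^[j] x = T.parent^[j] x := by
    intro j hj
    induction j with
    | zero => rfl
    | succ n ih =>
      rw [Function.iterate_succ_apply', Function.iterate_succ_apply', ih (by omega)]
      refine H _ ⟨n, rfl⟩ ⟨Nat.find hex - n, ?_⟩ (fun hyw => Nat.find_min hex (by omega) hyw)
      rw [← Function.iterate_add_apply, Nat.sub_add_cancel (by omega), hspec]
  exact ⟨Nat.find hex, by rw [key _ le_rfl, hspec]⟩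

end RBT

namespace NNIConfig
open RBT
variable {V : Type} [Fintype V] [DecidableEq V] {T T' : RBT V} (cfg : NNIConfig T T')
include cfg

lemma cb_ne : cfg.c ≠ cfg.b := cfg.child_c.2
lemma fb_ne : cfg.f ≠ cfg.b := cfg.child_f.2
lemma dc_ne : cfg.d ≠ cfg.c := cfg.child_d.2
lemma ec_ne : cfg.e ≠ cfg.c := cfg.child_e.2
lemma df_ne : cfg.d ≠ cfg.f := fun h => cfg.cb_ne (cfg.child_d.1 ▸ h ▸ cfg.child_f.1)
lemma ef_ne : cfg.e ≠ cfg.f := fun h => cfg.cb_ne (cfg.child_e.1 ▸ h ▸ cfg.child_f.1)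
lemma desc_dc : T.desc cfg.d cfg.c := desc_of_child cfg.child_d
lemma desc_ec : T.desc cfg.e cfg.c := desc_of_child cfg.child_e
lemma desc_cb : T.desc cfg.c cfg.b := desc_of_child cfg.child_c
lemma desc_fb : T.desc cfg.f cfg.b := desc_of_child cfg.child_f
lemma desc_db : T.desc cfg.d cfg.b := desc_trans cfg.desc_dc cfg.desc_cb
lemma desc_eb : T.desc cfg.e cfg.b := desc_trans cfg.desc_ec cfg.desc_cb
lemma db_ne : cfg.d ≠ cfg.b := by
  intro h
  exact cfg.cb_ne (desc_antisymm cfg.desc_cb (h ▸ cfg.desc_dc))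
lemma eb_ne : cfg.e ≠ cfg.b := by
  intro h
  exact cfg.cb_ne (desc_antisymm cfg.desc_cb (h ▸ cfg.desc_ec))
lemma ndesc_cf : ¬ T.desc cfg.c cfg.f :=
  sibling_not_desc cfg.child_c cfg.child_f (Ne.symm cfg.fc_ne)
lemma ndesc_fc : ¬ T.desc cfg.f cfg.c :=
  sibling_not_desc cfg.child_f cfg.child_c cfg.fc_ne
lemma ndesc_de : ¬ T.desc cfg.d cfg.e :=
  sibling_not_desc cfg.child_d cfg.child_e cfg.de_ne
lemma ndesc_ed : ¬ T.desc cfg.e cfg.d :=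
  sibling_not_desc cfg.child_e cfg.child_d (Ne.symm cfg.de_ne)
lemma ndesc_df : ¬ T.desc cfg.d cfg.f := by
  intro h
  rcases anc_child cfg.child_d h with h1 | h1
  · exact cfg.df_ne h1.symm
  · exact cfg.ndesc_cf h1
lemma ndesc_ef : ¬ T.desc cfg.e cfg.f := by
  intro h
  rcases anc_child cfg.child_e h with h1 | h1
  · exact cfg.ef_ne h1.symm
  · exact cfg.ndesc_cf h1
lemma ndesc_fd : ¬ T.desc cfg.f cfg.d := fun h => cfg.ndesc_fc (desc_trans h cfg.desc_dc)
lemma ndesc_fe : ¬ T.desc cfg.f cfg.e := fun h => cfg.ndesc_fc (desc_trans h cfg.desc_ec)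
lemma ndesc_bd : ¬ T.desc cfg.b cfg.d := fun h => cfg.db_ne (desc_antisymm cfg.desc_db h)
lemma ndesc_bf : ¬ T.desc cfg.b cfg.f := fun h => cfg.fb_ne (desc_antisymm cfg.desc_fb h)
lemma ndesc_bc : ¬ T.desc cfg.b cfg.c := fun h => cfg.cb_ne (desc_antisymm cfg.desc_cb h)

lemma child_c' : T'.isChild cfg.c cfg.b := by
  refine ⟨?_, cfg.cb_ne⟩
  rw [cfg.parent_eq cfg.c (Ne.symm cfg.dc_ne) (Ne.symm cfg.fc_ne)]
  exact cfg.child_c.1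

lemma child_e' : T'.isChild cfg.e cfg.c := by
  refine ⟨?_, cfg.ec_ne⟩
  rw [cfg.parent_eq cfg.e (Ne.symm cfg.de_ne) cfg.ef_ne]
  exact cfg.child_e.1

lemma child_b' : T'.isChild cfg.b cfg.a := by
  refine ⟨?_, cfg.child_b.2⟩
  rw [cfg.parent_eq cfg.b (Ne.symm cfg.db_ne) (Ne.symm cfg.fb_ne)]
  exact cfg.child_b.1

/-- The symmetric configuration, performing the NNI in reverse. -/
def symm : NNIConfig T' T where
  a := cfg.a
  b := cfg.b
  c := cfg.c
  d := cfg.f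
  e := cfg.e
  f := cfg.d
  child_b := cfg.child_b'
  child_c := cfg.child_c'
  child_f := cfg.child_d'
  fc_ne := cfg.dc_ne
  child_d := cfg.child_f'
  child_e := cfg.child_e'
  de_ne := Ne.symm cfg.ef_ne
  root_eq := cfg.root_eq.symm
  child_d' := cfg.child_f
  child_f' := cfg.child_d
  parent_eq := fun v h1 h2 => (cfg.parent_eq v h2 h1).symm

@[simp] lemma symm_a : cfg.symm.a = cfg.a := rfl
@[simp] lemma symm_b : cfg.symm.b = cfg.b := rfl
@[simp] lemma symm_c : cfg.symm.c = cfg.c := rfl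
@[simp] lemma symm_d : cfg.symm.d = cfg.f := rfl
@[simp] lemma symm_e : cfg.symm.e = cfg.e := rfl
@[simp] lemma symm_f : cfg.symm.f = cfg.d := rfl

/-- Descendancy transfers outside the subtree of `b`. -/
lemma desc_out {x : V} (hx : ¬ T.desc x cfg.b) {y : V} (h : T.desc x y) : T'.desc x y := by
  refine desc_transfer h (fun z hz1 hz2 hne => ?_)
  refine cfg.parent_eq z (fun hzd => ?_) (fun hzf => ?_)
  · exact hx (desc_trans (hzd ▸ hz1) cfg.desc_db)
  · exact hx (desc_trans (hzf ▸ hz1) cfg.desc_fb)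

/-- Descendancy transfers inside the subtrees of `d`, `e`, `f`. -/
lemma desc_sub {t : V} (ht : t = cfg.d ∨ t = cfg.e ∨ t = cfg.f) {x w : V}
    (hxw : T.desc x w) (hwt : T.desc w t) : T'.desc x w := by
  refine desc_transfer hxw (fun z hz1 hz2 hne => ?_)
  have hzt : T.desc z t := desc_trans hz2 hwt
  refine cfg.parent_eq z (fun hzd => ?_) (fun hzf => ?_)
  · subst hzd
    rcases ht with rfl | rfl | rfl
    · exact hne (desc_antisymm hz2 hwt)
    · exact cfg.ndesc_de hzt
    · exact cfg.ndesc_df hzt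
  · subst hzf
    rcases ht with rfl | rfl | rfl
    · exact cfg.ndesc_fd hzt
    · exact cfg.ndesc_fe hzt
    · exact hne (desc_antisymm hz2 hwt)

/-- Descendancy of ancestors of `b` transfers. -/
lemma desc_anc_b {y : V} (h : T.desc cfg.b y) : T'.desc cfg.b y := by
  refine desc_transfer h (fun z hz1 hz2 hne => ?_)
  refine cfg.parent_eq z (fun hzd => ?_) (fun hzf => ?_)
  · exact cfg.db_ne (desc_antisymm cfg.desc_db (hzd ▸ hz1))
  · exact cfg.fb_ne (desc_antisymm cfg.desc_fb (hzf ▸ hz1))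

lemma desc_b_cases {x : V} (h : T.desc x cfg.b) :
    x = cfg.b ∨ x = cfg.c ∨ T.desc x cfg.d ∨ T.desc x cfg.e ∨ T.desc x cfg.f := by
  by_cases hxb : x = cfg.b
  · exact Or.inl hxb
  obtain ⟨z, hz, hxz⟩ := exists_child_of_desc_ne h hxb
  rcases children_pair cfg.child_c cfg.child_f (Ne.symm cfg.fc_ne) z hz with rfl | rfl
  · by_cases hxc : x = cfg.c
    · exact Or.inr (Or.inl hxc)
    obtain ⟨z', hz', hxz'⟩ := exists_child_of_desc_ne hxz hxc
    rcases children_pair cfg.child_d cfg.child_e cfg.de_ne z' hz' with rfl | rfl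
    · exact Or.inr (Or.inr (Or.inl hxz'))
    · exact Or.inr (Or.inr (Or.inr (Or.inl hxz')))
  · exact Or.inr (Or.inr (Or.inr (Or.inr hxz)))

/-- The subtree of `b` is the same in `T` and `T'` (one direction). -/
lemma desc_b_dir {x : V} (h : T.desc x cfg.b) : T'.desc x cfg.b := by
  rcases cfg.desc_b_cases h with rfl | rfl | h1 | h1 | h1
  · exact desc_refl _
  · exact desc_of_child cfg.child_c'
  · exact desc_trans (cfg.desc_sub (Or.inl rfl) h1 (desc_refl _))
      (desc_of_child cfg.child_d')
  · exact desc_trans (cfg.desc_sub (Or.inr (Or.inl rfl)) h1 (desc_refl _))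
      (desc_trans (desc_of_child cfg.child_e') (desc_of_child cfg.child_c'))
  · exact desc_trans (cfg.desc_sub (Or.inr (Or.inr rfl)) h1 (desc_refl _))
      (desc_trans (desc_of_child cfg.child_f') (desc_of_child cfg.child_c'))

lemma desc_b_iff {x : V} : T.desc x cfg.b ↔ T'.desc x cfg.b :=
  ⟨cfg.desc_b_dir, fun h => cfg.symm.desc_b_dir h⟩

lemma desc_out_iff {x : V} (hx : ¬ T.desc x cfg.b) {y : V} :
    T.desc x y ↔ T'.desc x y :=
  ⟨cfg.desc_out hx, cfg.symm.desc_out (fun h => hx (cfg.desc_b_iff.mpr h))⟩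

/-- Leaves transfer. -/
lemma isLeaf_dir {v : V} (hv : T.isLeaf v) : T'.isLeaf v := by
  intro u hu
  by_cases hud : u = cfg.d
  · subst hud
    have : cfg.b = v := (cfg.child_d'.1).symm.trans hu
    subst this
    exact absurd (hv cfg.c cfg.child_c.1) cfg.cb_ne
  by_cases huf : u = cfg.f
  · subst huf
    have : cfg.c = v := (cfg.child_f'.1).symm.trans hu
    subst this
    exact absurd (hv cfg.d cfg.child_d.1) cfg.dc_ne
  · exact hv u ((cfg.parent_eq u hud huf) ▸ hu)

lemma isLeaf_iff {v : V} : T.isLeaf v ↔ T'.isLeaf v :=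
  ⟨cfg.isLeaf_dir, fun h => cfg.symm.isLeaf_dir h⟩

lemma isInternal_iff {v : V} : T.isInternal v ↔ T'.isInternal v :=
  not_congr cfg.isLeaf_iff

end NNIConfig

namespace RBT
variable {V : Type} [Fintype V] [DecidableEq V] {T : RBT V}

lemma freely_set_congr {S1 S2 : Set V} {u : V} (h : ∀ w, T.desc w u → (w ∈ S1 ↔ w ∈ S2)) :
    Freely T S1 u ↔ Freely T S2 u := by
  constructor <;> rintro ⟨l, hl, hlu, hcl⟩ <;> refine ⟨l, hl, hlu, fun w hw1 hw2 => ?_⟩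
  · exact fun hm => hcl w hw1 hw2 ((h w hw2).mpr hm)
  · exact fun hm => hcl w hw1 hw2 ((h w hw2).mp hm)

end RBT

namespace NNIConfig
open RBT
variable {V : Type} [Fintype V] [DecidableEq V] {T T' : RBT V} (cfg : NNIConfig T T')
include cfg

lemma ndesc_be : ¬ T.desc cfg.b cfg.e := fun h => cfg.eb_ne (desc_antisymm cfg.desc_eb h)
lemma ndesc_cd : ¬ T.desc cfg.c cfg.d := fun h => cfg.dc_ne (desc_antisymm cfg.desc_dc h)
lemma ndesc_ce : ¬ T.desc cfg.c cfg.e := fun h => cfg.ec_ne (desc_antisymm cfg.desc_ec h)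

lemma ac_ne : cfg.a ≠ cfg.c := by
  intro h
  exact cfg.ndesc_bc (h ▸ desc_of_child cfg.child_b)

lemma sets_agree_below {t : V} (ht : t = cfg.d ∨ t = cfg.e ∨ t = cfg.f) {S1 S2 : Set V}
    (h : ∀ w, w ≠ cfg.b → w ≠ cfg.c → (w ∈ S1 ↔ w ∈ S2)) :
    ∀ w, T.desc w t → (w ∈ S1 ↔ w ∈ S2) := by
  intro w hw
  refine h w (fun hb => ?_) (fun hc => ?_)
  · subst hb
    rcases ht with rfl | rfl | rfl
    · exact cfg.ndesc_bd hw
    · exact cfg.ndesc_be hw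
    · exact cfg.ndesc_bf hw
  · subst hc
    rcases ht with rfl | rfl | rfl
    · exact cfg.ndesc_cd hw
    · exact cfg.ndesc_ce hw
    · exact cfg.ndesc_cf hw

lemma desc_sub_iff {t : V} (ht : t = cfg.d ∨ t = cfg.e ∨ t = cfg.f) {x w : V}
    (hwt : T.desc w t) : T.desc x w ↔ T'.desc x w := by
  have ht' : t = cfg.symm.d ∨ t = cfg.symm.e ∨ t = cfg.symm.f := by
    rcases ht with rfl | rfl | rfl
    · exact Or.inr (Or.inr rfl)
    · exact Or.inr (Or.inl rfl)
    · exact Or.inl rfl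
  have hwt' : T'.desc w t := cfg.desc_sub ht hwt (desc_refl t)
  exact ⟨fun h => cfg.desc_sub ht h hwt, fun h => cfg.symm.desc_sub ht' h hwt'⟩

/-- `Freely` transfers inside the subtrees of `d`, `e`, `f`. -/
lemma freely_sub_dir {t : V} (ht : t = cfg.d ∨ t = cfg.e ∨ t = cfg.f) {u : V}
    (hut : T.desc u t) {S1 S2 : Set V}
    (hS : ∀ w, T.desc w t → (w ∈ S1 ↔ w ∈ S2))
    (h : Freely T S1 u) : Freely T' S2 u := by
  obtain ⟨l, hl, hlu, hcl⟩ := h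
  have hlt : T.desc l t := desc_trans hlu hut
  refine ⟨l, cfg.isLeaf_dir hl, (cfg.desc_sub_iff ht hut).mp hlu, fun w hw1 hw2 => ?_⟩
  have hw2T : T.desc w u := by
    rw [cfg.desc_sub_iff ht hut]; exact hw2
  have hw1T : T.desc l w := by
    rw [cfg.desc_sub_iff ht (desc_trans hw2T hut)]; exact hw1
  exact fun hm => hcl w hw1T hw2T ((hS w (desc_trans hw2T hut)).mpr hm)

/-- The key lemma: `Freely` transfers outside the strict subtree of `b`, provided it
transfers at `b` itself. -/
lemma freely_out_dir {S1 S2 : Set V}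
    (hS : ∀ w, w ≠ cfg.b → w ≠ cfg.c → (w ∈ S1 ↔ w ∈ S2))
    (hb : Freely T S1 cfg.b → Freely T' S2 cfg.b)
    {u : V} (hu : ¬ (T.desc u cfg.b ∧ u ≠ cfg.b))
    (h : Freely T S1 u) : Freely T' S2 u := by
  obtain ⟨l, hl, hlu, hcl⟩ := h
  by_cases hlb : T.desc l cfg.b
  · -- the witness leaf lies under b
    by_cases hub : u = cfg.b
    · subst hub
      exact hb ⟨l, hl, hlu, hcl⟩
    · have hbu : T.desc cfg.b u := by
        rcases desc_total hlb hlu with hh | hh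
        · exact hh
        · exact absurd ⟨hh, hub⟩ hu
      have hfb : Freely T S1 cfg.b :=
        ⟨l, hl, hlb, fun w h1 h2 => hcl w h1 (desc_trans h2 hbu)⟩
      obtain ⟨l', hl', hlb', hcl'⟩ := hb hfb
      refine ⟨l', hl', desc_trans hlb' (cfg.desc_anc_b hbu), fun w hw1 hw2 => ?_⟩
      rcases desc_total hlb' hw1 with hh | hh
      · -- b ≤ w in T'
        by_cases hwb : w = cfg.b
        · subst hwb
          exact hcl' _ hw1 (desc_refl _)
        · have hwnc : w ≠ cfg.c := by
            rintro rfl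
            exact cfg.cb_ne (desc_antisymm (desc_of_child cfg.child_c') hh)
          have hbwT : T.desc cfg.b w := cfg.symm.desc_anc_b hh
          have hw2T : T.desc w u :=
            cfg.symm.desc_out (fun h2 => hwb (desc_antisymm h2 hh)) hw2
          have hw1T : T.desc l w := desc_trans hlb hbwT
          exact fun hm => hcl w hw1T hw2T ((hS w hwb hwnc).mpr hm)
      · exact hcl' w hw1 hh
  · -- the witness leaf is outside the subtree of b
    refine ⟨l, cfg.isLeaf_dir hl, (cfg.desc_out_iff hlb).mp hlu, fun w hw1 hw2 => ?_⟩
    have hw1T : T.desc l w := (cfg.desc_out_iff hlb).mpr hw1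
    have hwb : ¬ T.desc w cfg.b := fun hh => hlb (desc_trans hw1T hh)
    have hw2T : T.desc w u := (cfg.desc_out_iff hwb).mpr hw2
    have hwnb : w ≠ cfg.b := fun hh => hlb (hh ▸ hw1T)
    have hwnc : w ≠ cfg.c := fun hh => hlb (desc_trans (hh ▸ hw1T) cfg.desc_cb)
    exact fun hm => hcl w hw1T hw2T ((hS w hwnb hwnc).mpr hm)

lemma children_b_T : ∀ z, T.isChild z cfg.b → z = cfg.c ∨ z = cfg.f :=
  children_pair cfg.child_c cfg.child_f (Ne.symm cfg.fc_ne)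
lemma children_c_T : ∀ z, T.isChild z cfg.c → z = cfg.d ∨ z = cfg.e :=
  children_pair cfg.child_d cfg.child_e cfg.de_ne
lemma children_b_T' : ∀ z, T'.isChild z cfg.b → z = cfg.d ∨ z = cfg.c :=
  children_pair cfg.child_d' cfg.child_c' cfg.dc_ne
lemma children_c_T' : ∀ z, T'.isChild z cfg.c → z = cfg.e ∨ z = cfg.f :=
  children_pair cfg.child_e' cfg.child_f' cfg.ef_ne

lemma child_other_eq {u v : V} (hvb : v ≠ cfg.b) (hvc : v ≠ cfg.c) :
    T.isChild u v ↔ T'.isChild u v := by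
  constructor <;> intro h
  · have hud : u ≠ cfg.d := fun hh => hvc (by rw [← h.1, hh, cfg.child_d.1])
    have huf : u ≠ cfg.f := fun hh => hvb (by rw [← h.1, hh, cfg.child_f.1])
    exact ⟨(cfg.parent_eq u hud huf) ▸ h.1, h.2⟩
  · have hud : u ≠ cfg.d := fun hh => hvb (by rw [← h.1, hh, cfg.child_d'.1])
    have huf : u ≠ cfg.f := fun hh => hvc (by rw [← h.1, hh, cfg.child_f'.1])
    exact ⟨by rw [← cfg.parent_eq u hud huf]; exact h.1, h.2⟩

lemma internal_c : T.isInternal cfg.c := not_isLeaf_of_child cfg.child_d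
lemma internal_b : T.isInternal cfg.b := not_isLeaf_of_child cfg.child_c
lemma internal_c' : T'.isInternal cfg.c := not_isLeaf_of_child cfg.child_f'
lemma internal_b' : T'.isInternal cfg.b := not_isLeaf_of_child cfg.child_d'

end NNIConfig

namespace NNIConfig
open RBT
variable {V : Type} [Fintype V] [DecidableEq V] {T T' : RBT V} (cfg : NNIConfig T T')
include cfg

lemma good_internal_transfer {S : Set V} (h : ∀ v ∈ S, T.isInternal v) :
    ∀ v ∈ S, T'.isInternal v := fun v hv => (cfg.isInternal_iff).mp (h v hv)

/-- A `b`-nonmaintaining top set of `T` yields a `c`-nonmaintaining top set of `T'`. -/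
lemma main1 {S : Set V} (hbS : cfg.b ∈ S) (hG : Good T S) (hG' : ¬ Good T' S) :
    cfg.c ∉ S ∧ Good T' ((S \ {cfg.b}) ∪ {cfg.c}) ∧ ¬ Good T ((S \ {cfg.b}) ∪ {cfg.c}) := by
  have hfree_c : Freely T S cfg.c := hG.2 cfg.b hbS cfg.c cfg.child_c
  have hfree_f : Freely T S cfg.f := hG.2 cfg.b hbS cfg.f cfg.child_f
  have hcS : cfg.c ∉ S := hfree_c.notMem
  have haS : cfg.a ∉ S := fun ha => (hG.2 cfg.a ha cfg.b cfg.child_b).notMem hbS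
  have hpq : Freely T S cfg.d ∨ Freely T S cfg.e := by
    obtain ⟨-, u, hu, hfu⟩ := (freely_decomp cfg.internal_c).mp hfree_c
    rcases cfg.children_c_T u hu with rfl | rfl
    · exact Or.inl hfu
    · exact Or.inr hfu
  have hSS : ∀ w : V, w ≠ cfg.b → w ≠ cfg.c → (w ∈ S ↔ w ∈ S) := fun _ _ _ => Iff.rfl
  have hfbF : Freely T S cfg.b → Freely T' S cfg.b := fun h => absurd hbS h.notMem
  -- first: ¬ Freely T S d
  have notp : ¬ Freely T S cfg.d := by
    intro hp
    apply hG'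
    refine ⟨cfg.good_internal_transfer hG.1, fun v hv u hu => ?_⟩
    by_cases hvb : v = cfg.b
    · subst hvb
      rcases cfg.children_b_T' u hu with rfl | rfl
      · exact cfg.freely_sub_dir (Or.inl rfl) (desc_refl _) (fun _ _ => Iff.rfl) hp
      · refine (freely_decomp cfg.internal_c').mpr ⟨hcS, cfg.f, cfg.child_f', ?_⟩
        exact cfg.freely_sub_dir (Or.inr (Or.inr rfl)) (desc_refl _) (fun _ _ => Iff.rfl) hfree_f
    by_cases hvc : v = cfg.c
    · exact absurd (hvc ▸ hv) hcS
    · have huT : T.isChild u v := (cfg.child_other_eq hvb hvc).mpr hu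
      have hfu : Freely T S u := hG.2 v hv u huT
      by_cases hub : T.desc u cfg.b
      · rcases cfg.desc_b_cases hub with rfl | rfl | h1 | h1 | h1
        · have hva : v = cfg.a := huT.1.symm.trans cfg.child_b.1
          exact absurd (hva ▸ hv) haS
        · have hvb' : v = cfg.b := huT.1.symm.trans cfg.child_c.1
          exact absurd hvb' hvb
        · exact cfg.freely_sub_dir (Or.inl rfl) h1 (fun _ _ => Iff.rfl) hfu
        · exact cfg.freely_sub_dir (Or.inr (Or.inl rfl)) h1 (fun _ _ => Iff.rfl) hfu
        · exact cfg.freely_sub_dir (Or.inr (Or.inr rfl)) h1 (fun _ _ => Iff.rfl) hfu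
      · exact cfg.freely_out_dir hSS hfbF (fun hh => hub hh.1) hfu
  have hq : Freely T S cfg.e := hpq.resolve_left notp
  set S' : Set V := (S \ {cfg.b}) ∪ {cfg.c} with hS'def
  have hbS' : cfg.b ∉ S' := by
    rintro (⟨-, h⟩ | h)
    · exact h rfl
    · exact cfg.cb_ne (Set.mem_singleton_iff.mp h).symm
  have hcS' : cfg.c ∈ S' := Or.inr rfl
  have hagree : ∀ w : V, w ≠ cfg.b → w ≠ cfg.c → (w ∈ S ↔ w ∈ S') := by
    intro w hwb hwc
    simp only [hS'def, Set.mem_union, Set.mem_diff, Set.mem_singleton_iff]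
    constructor
    · exact fun h => Or.inl ⟨h, hwb⟩
    · rintro (⟨h, -⟩ | h)
      · exact h
      · exact absurd h hwc
  have hfbF' : Freely T S cfg.b → Freely T' S' cfg.b := fun h => absurd hbS h.notMem
  refine ⟨hcS, ⟨?_, ?_⟩, ?_⟩
  · -- internality
    intro v hv
    rcases hv with ⟨hv, -⟩ | hv
    · exact (cfg.isInternal_iff).mp (hG.1 v hv)
    · rw [Set.mem_singleton_iff] at hv
      exact hv ▸ cfg.internal_c'
  · -- the Freely conditions for T', S'
    intro v hv u hu
    by_cases hvc : v = cfg.c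
    · subst hvc
      rcases cfg.children_c_T' u hu with rfl | rfl
      · exact cfg.freely_sub_dir (Or.inr (Or.inl rfl)) (desc_refl _)
          (cfg.sets_agree_below (Or.inr (Or.inl rfl)) hagree) hq
      · exact cfg.freely_sub_dir (Or.inr (Or.inr rfl)) (desc_refl _)
          (cfg.sets_agree_below (Or.inr (Or.inr rfl)) hagree) hfree_f
    · have hvS : v ∈ S := by
        rcases hv with ⟨h, -⟩ | h
        · exact h
        · exact absurd (Set.mem_singleton_iff.mp h) hvc
      have hvb : v ≠ cfg.b := fun hh => hbS' (hh ▸ hv)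
      have huT : T.isChild u v := (cfg.child_other_eq hvb hvc).mpr hu
      have hfu : Freely T S u := hG.2 v hvS u huT
      by_cases hub : T.desc u cfg.b
      · rcases cfg.desc_b_cases hub with rfl | rfl | h1 | h1 | h1
        · have hva : v = cfg.a := huT.1.symm.trans cfg.child_b.1
          exact absurd (hva ▸ hvS) haS
        · have hvb' : v = cfg.b := huT.1.symm.trans cfg.child_c.1
          exact absurd hvb' hvb
        · exact cfg.freely_sub_dir (Or.inl rfl) h1
            (cfg.sets_agree_below (Or.inl rfl) hagree) hfu
        · exact cfg.freely_sub_dir (Or.inr (Or.inl rfl)) h1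
            (cfg.sets_agree_below (Or.inr (Or.inl rfl)) hagree) hfu
        · exact cfg.freely_sub_dir (Or.inr (Or.inr rfl)) h1
            (cfg.sets_agree_below (Or.inr (Or.inr rfl)) hagree) hfu
      · exact cfg.freely_out_dir hagree hfbF' (fun hh => hub hh.1) hfu
  · -- ¬ Good T S'
    intro hGS'
    have : Freely T S' cfg.d := hGS'.2 cfg.c hcS' cfg.d cfg.child_d
    rw [← freely_set_congr (cfg.sets_agree_below (Or.inl rfl) hagree)] at this
    exact notp this

end NNIConfig

namespace NNIConfig
open RBT
variable {V : Type} [Fintype V] [DecidableEq V] {T T' : RBT V} (cfg : NNIConfig T T')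
include cfg

/-- A `c`-nonmaintaining top set of `T'` yields a `b`-nonmaintaining top set of `T`. -/
lemma main2 {S : Set V} (hcS : cfg.c ∈ S) (hG' : Good T' S) (hG : ¬ Good T S) :
    cfg.b ∉ S ∧ Good T ((S \ {cfg.c}) ∪ {cfg.b}) ∧ ¬ Good T' ((S \ {cfg.c}) ∪ {cfg.b}) := by
  have hbS : cfg.b ∉ S := fun hb => (hG'.2 cfg.b hb cfg.c cfg.child_c').notMem hcS
  have hq : Freely T' S cfg.e := hG'.2 cfg.c hcS cfg.e cfg.child_e'
  have hr : Freely T' S cfg.f := hG'.2 cfg.c hcS cfg.f cfg.child_f'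
  have hqT : Freely T S cfg.e :=
    cfg.symm.freely_sub_dir (Or.inr (Or.inl rfl)) (desc_refl _) (fun _ _ => Iff.rfl) hq
  have hrT : Freely T S cfg.f :=
    cfg.symm.freely_sub_dir (Or.inl rfl) (desc_refl _) (fun _ _ => Iff.rfl) hr
  have hfreeTb : Freely T S cfg.b :=
    (freely_decomp cfg.internal_b).mpr ⟨hbS, cfg.f, cfg.child_f, hrT⟩
  have notp : ¬ Freely T' S cfg.d := by
    intro hp
    have hpT : Freely T S cfg.d :=
      cfg.symm.freely_sub_dir (Or.inr (Or.inr rfl)) (desc_refl _) (fun _ _ => Iff.rfl) hp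
    apply hG
    refine ⟨cfg.symm.good_internal_transfer hG'.1, fun v hv u hu => ?_⟩
    by_cases hvb : v = cfg.b
    · exact absurd (hvb ▸ hv) hbS
    by_cases hvc : v = cfg.c
    · subst hvc
      rcases cfg.children_c_T u hu with rfl | rfl
      · exact hpT
      · exact hqT
    · have huT' : T'.isChild u v := (cfg.child_other_eq hvb hvc).mp hu
      have hfu' : Freely T' S u := hG'.2 v hv u huT'
      by_cases hub : T'.desc u cfg.b
      · rcases cfg.symm.desc_b_cases hub with rfl | rfl | h1 | h1 | h1
        · exact hfreeTb
        · have hvb' : v = cfg.b := hu.1.symm.trans cfg.child_c.1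
          exact absurd hvb' hvb
        · exact cfg.symm.freely_sub_dir (Or.inl rfl) h1 (fun _ _ => Iff.rfl) hfu'
        · exact cfg.symm.freely_sub_dir (Or.inr (Or.inl rfl)) h1 (fun _ _ => Iff.rfl) hfu'
        · exact cfg.symm.freely_sub_dir (Or.inr (Or.inr rfl)) h1 (fun _ _ => Iff.rfl) hfu'
      · exact cfg.symm.freely_out_dir (fun _ _ _ => Iff.rfl) (fun _ => hfreeTb)
          (fun hh => hub hh.1) hfu'
  have haS : cfg.a ∉ S := by
    intro ha
    have hfb' : Freely T' S cfg.b := hG'.2 cfg.a ha cfg.b cfg.child_b'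
    obtain ⟨-, u, hu, hfu⟩ := (freely_decomp cfg.internal_b').mp hfb'
    rcases cfg.children_b_T' u hu with rfl | rfl
    · exact notp hfu
    · exact hfu.notMem hcS
  set Sb : Set V := (S \ {cfg.c}) ∪ {cfg.b} with hSbdef
  have hbSb : cfg.b ∈ Sb := Or.inr rfl
  have hcSb : cfg.c ∉ Sb := by
    rintro (⟨-, h⟩ | h)
    · exact h rfl
    · exact cfg.cb_ne (Set.mem_singleton_iff.mp h)
  have hagree : ∀ w : V, w ≠ cfg.b → w ≠ cfg.c → (w ∈ S ↔ w ∈ Sb) := by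
    intro w hwb hwc
    constructor
    · exact fun h => Or.inl ⟨h, hwc⟩
    · rintro (⟨h, -⟩ | h)
      · exact h
      · exact absurd (Set.mem_singleton_iff.mp h) hwb
  have hqSb : Freely T Sb cfg.e :=
    cfg.symm.freely_sub_dir (Or.inr (Or.inl rfl)) (desc_refl _)
      (cfg.symm.sets_agree_below (Or.inr (Or.inl rfl)) hagree) hq
  have hrSb : Freely T Sb cfg.f :=
    cfg.symm.freely_sub_dir (Or.inl rfl) (desc_refl _)
      (cfg.symm.sets_agree_below (Or.inl rfl) hagree) hr
  have hbFalse : Freely T' S cfg.b → False := by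
    intro h
    obtain ⟨-, u, hu, hfu⟩ := (freely_decomp cfg.internal_b').mp h
    rcases cfg.children_b_T' u hu with rfl | rfl
    · exact notp hfu
    · exact hfu.notMem hcS
  refine ⟨hbS, ⟨?_, ?_⟩, ?_⟩
  · intro v hv
    rcases hv with ⟨hv, -⟩ | hv
    · exact (cfg.isInternal_iff).mpr (hG'.1 v hv)
    · rw [Set.mem_singleton_iff] at hv
      exact hv ▸ cfg.internal_b
  · intro v hv u hu
    by_cases hvb : v = cfg.b
    · subst hvb
      rcases cfg.children_b_T u hu with rfl | rfl
      · exact (freely_decomp cfg.internal_c).mpr ⟨hcSb, cfg.e, cfg.child_e, hqSb⟩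
      · exact hrSb
    · have hvS : v ∈ S := by
        rcases hv with ⟨h, -⟩ | h
        · exact h
        · exact absurd (Set.mem_singleton_iff.mp h) hvb
      have hvc : v ≠ cfg.c := fun hh => hcSb (hh ▸ hv)
      have huT' : T'.isChild u v := (cfg.child_other_eq hvb hvc).mp hu
      have hfu' : Freely T' S u := hG'.2 v hvS u huT'
      by_cases hub : T'.desc u cfg.b
      · rcases cfg.symm.desc_b_cases hub with rfl | rfl | h1 | h1 | h1
        · have hva : v = cfg.a := hu.1.symm.trans cfg.child_b.1
          exact absurd (hva ▸ hvS) haS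
        · have hvb' : v = cfg.b := hu.1.symm.trans cfg.child_c.1
          exact absurd hvb' hvb
        · exact cfg.symm.freely_sub_dir (Or.inl rfl) h1
            (cfg.symm.sets_agree_below (Or.inl rfl) hagree) hfu'
        · exact cfg.symm.freely_sub_dir (Or.inr (Or.inl rfl)) h1
            (cfg.symm.sets_agree_below (Or.inr (Or.inl rfl)) hagree) hfu'
        · exact cfg.symm.freely_sub_dir (Or.inr (Or.inr rfl)) h1
            (cfg.symm.sets_agree_below (Or.inr (Or.inr rfl)) hagree) hfu'
      · exact cfg.symm.freely_out_dir hagree (fun h => absurd h hbFalse)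
          (fun hh => hub hh.1) hfu'
  · intro hGSb
    have : Freely T' Sb cfg.d := hGSb.2 cfg.b hbSb cfg.d cfg.child_d'
    exact notp ((freely_set_congr
      (cfg.symm.sets_agree_below (Or.inr (Or.inr rfl)) hagree)).mpr this)

end NNIConfig

namespace RBT
variable {V : Type} [Fintype V] [DecidableEq V]

lemma indicator_comp_swap {β γ : V} (hne : β ≠ γ) {S : Set V} (hβ : β ∈ S) (hγ : γ ∉ S) :
    (Set.indicator S (fun _ => (1 : ℝ))) ∘ (Equiv.swap β γ) =
      Set.indicator ((S \ {β}) ∪ {γ}) (fun _ => (1 : ℝ)) := by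
  funext v
  simp only [Function.comp_apply]
  by_cases hvβ : v = β
  · rw [hvβ, Equiv.swap_apply_left]
    have h1 : β ∉ (S \ {β}) ∪ {γ} := by
      rintro (⟨-, h⟩ | h)
      · exact h rfl
      · exact hne (Set.mem_singleton_iff.mp h)
    rw [Set.indicator_of_notMem hγ, Set.indicator_of_notMem h1]
  by_cases hvγ : v = γ
  · rw [hvγ, Equiv.swap_apply_right]
    have h1 : γ ∈ (S \ {β}) ∪ {γ} := Or.inr rfl
    rw [Set.indicator_of_mem hβ, Set.indicator_of_mem h1]
  · rw [Equiv.swap_apply_of_ne_of_ne hvβ hvγ]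
    by_cases hv : v ∈ S
    · have h1 : v ∈ (S \ {β}) ∪ {γ} := Or.inl ⟨hv, hvβ⟩
      rw [Set.indicator_of_mem hv, Set.indicator_of_mem h1]
    · have h1 : v ∉ (S \ {β}) ∪ {γ} := by
        rintro (⟨h, -⟩ | h)
        · exact hv h
        · exact hvγ (Set.mem_singleton_iff.mp h)
      rw [Set.indicator_of_notMem hv, Set.indicator_of_notMem h1]

end RBT

namespace NNIConfig
open RBT
variable {V : Type} [Fintype V] [DecidableEq V] {T T' : RBT V} (cfg : NNIConfig T T')
include cfg

lemma count_eq :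
    {x : V → ℝ | IsTopVecOf T x ∧ ¬ IsTopVecOf T' x ∧ x cfg.b = 1}.ncard =
      {x : V → ℝ | IsTopVecOf T' x ∧ ¬ IsTopVecOf T x ∧ x cfg.c = 1}.ncard := by
  classical
  set σ : (V → ℝ) → (V → ℝ) := fun x => x ∘ (Equiv.swap cfg.b cfg.c) with hσdef
  have hσinv : ∀ x, σ (σ x) = x := by
    intro x
    funext v
    simp [hσdef, Equiv.swap_apply_self]
  have hσinj : Function.Injective σ := fun x y h => by rw [← hσinv x, h, hσinv y]
  have hbc : cfg.b ≠ cfg.c := Ne.symm cfg.cb_ne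
  have himg : σ '' {x : V → ℝ | IsTopVecOf T x ∧ ¬ IsTopVecOf T' x ∧ x cfg.b = 1} =
      {x : V → ℝ | IsTopVecOf T' x ∧ ¬ IsTopVecOf T x ∧ x cfg.c = 1} := by
    apply Set.eq_of_subset_of_subset
    · rintro y ⟨x, ⟨hT, hnT', hxb⟩, rfl⟩
      obtain ⟨S, hGood, rfl⟩ := (isTopVecOf_iff T x).mp hT
      have hbS : cfg.b ∈ S := indicator_one_eq_one.mp hxb
      have hnG' : ¬ Good T' S := fun h => hnT' ((isTopVecOf_iff T' _).mpr ⟨S, h, rfl⟩)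
      obtain ⟨hcS, hGs', hnGs⟩ := cfg.main1 hbS hGood hnG'
      have hσx : σ (Set.indicator S (fun _ => (1 : ℝ))) =
          Set.indicator ((S \ {cfg.b}) ∪ {cfg.c}) (fun _ => (1 : ℝ)) :=
        indicator_comp_swap hbc hbS hcS
      rw [hσx]
      refine ⟨(isTopVecOf_iff T' _).mpr ⟨_, hGs', rfl⟩, ?_, ?_⟩
      · rintro ⟨P, hP⟩
        obtain ⟨S2, hG2, heq⟩ := (isTopVecOf_iff T _).mp ⟨P, hP⟩
        rw [← indicator_one_injective heq] at hG2
        exact hnGs hG2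
      · exact indicator_one_eq_one.mpr (Or.inr rfl)
    · intro y hy
      obtain ⟨hT', hnT, hyc⟩ := hy
      obtain ⟨S, hGood', rfl⟩ := (isTopVecOf_iff T' y).mp hT'
      have hcS : cfg.c ∈ S := indicator_one_eq_one.mp hyc
      have hnG : ¬ Good T S := fun h => hnT ((isTopVecOf_iff T _).mpr ⟨S, h, rfl⟩)
      obtain ⟨hbS, hGb, hnGb'⟩ := cfg.main2 hcS hGood' hnG
      have hσy : σ (Set.indicator S (fun _ => (1 : ℝ))) =
          Set.indicator ((S \ {cfg.c}) ∪ {cfg.b}) (fun _ => (1 : ℝ)) := by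
        rw [hσdef]
        simp only []
        rw [Equiv.swap_comm]
        exact indicator_comp_swap cfg.cb_ne hcS hbS
      refine ⟨σ (Set.indicator S (fun _ => (1 : ℝ))), ?_, hσinv _⟩
      rw [hσy]
      refine ⟨(isTopVecOf_iff T _).mpr ⟨_, hGb, rfl⟩, ?_, ?_⟩
      · rintro ⟨P, hP⟩
        obtain ⟨S2, hG2, heq⟩ := (isTopVecOf_iff T' _).mp ⟨P, hP⟩
        rw [← indicator_one_injective heq] at hG2
        exact hnGb' hG2
      · exact indicator_one_eq_one.mpr (Or.inr rfl)
  calc {x : V → ℝ | IsTopVecOf T x ∧ ¬ IsTopVecOf T' x ∧ x cfg.b = 1}.ncard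
      = (σ '' {x : V → ℝ | IsTopVecOf T x ∧ ¬ IsTopVecOf T' x ∧ x cfg.b = 1}).ncard :=
        (Set.ncard_image_of_injective _ hσinj).symm
    _ = _ := by rw [himg]

end NNIConfig

/-- Let `T'` be obtained from the rooted binary tree `T` by an NNI at
the configuration `(a, b, c, d, e, f)`.  Then the number of `b`-nonmaintaining
top-vectors of `T` equals the number of `c`-nonmaintaining top-vectors of `T'`, and the
number of `c`-nonmaintaining top-vectors of `T` equals the number of `b`-nonmaintaining
top-vectors of `T'`.  (A top-vector of `T` is nonmaintaining if it is not a top-vector of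
`T'`, and vice versa; it is `v`-nonmaintaining if moreover its `v`-coordinate is 1.) -/
theorem cfnmc_nni_nonmaintaining_counts {V : Type} [Fintype V] [DecidableEq V]
    (T T' : RBT V) (cfg : NNIConfig T T') :
    {x : V → ℝ | IsTopVecOf T x ∧ ¬ IsTopVecOf T' x ∧ x cfg.b = 1}.ncard =
        {x : V → ℝ | IsTopVecOf T' x ∧ ¬ IsTopVecOf T x ∧ x cfg.c = 1}.ncard ∧
      {x : V → ℝ | IsTopVecOf T x ∧ ¬ IsTopVecOf T' x ∧ x cfg.c = 1}.ncard =
        {x : V → ℝ | IsTopVecOf T' x ∧ ¬ IsTopVecOf T x ∧ x cfg.b = 1}.ncard := by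
  exact ⟨cfg.count_eq, (cfg.symm.count_eq).symm⟩
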